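/- Let X = Σᵢ aᵢ ∂/∂xᵢ and Y = Σᵢ bᵢ ∂/∂xᵢ be formal vector fields on ℂⁿ (derivations of ℂ[[x₁,…,xₙ]]) with all aᵢ ∈ m² (i.e. X has vanishing linear part at the origin) and all bᵢ ∈ m. Let c ∈ ℂ with c ≠ 0. If ⁅X, Y⁆ = c • Y, then Y = 0. -/

import Mathlib

open MvPowerSeries

/-- The ideal of formal power series with zero constant term (the maximal ideal). -/
noncomputable def mIdeal (n : ℕ) : Ideal (MvPowerSeries (Fin n) ℂ) :=
  RingHom.ker (MvPowerSeries.constantCoeff (σ := Fin n) (R := ℂ))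

/-- Formal partial derivative `∂/∂xᵢ` on `ℂ[[x₁,…,xₙ]]`. -/
noncomputable def pderivPS {n : ℕ} (i : Fin n) (f : MvPowerSeries (Fin n) ℂ) :
    MvPowerSeries (Fin n) ℂ :=
  fun m => ((m i + 1 : ℕ) : ℂ) * MvPowerSeries.coeff (R := ℂ) (m + Finsupp.single i 1) f

/-- The `i`-th coefficient of the commutator `[X, Y]` of the formal vector fields
`X = Σ aⱼ ∂/∂xⱼ` and `Y = Σ bⱼ ∂/∂xⱼ`. -/
noncomputable def bracketCoeff {n : ℕ} (a b : Fin n → MvPowerSeries (Fin n) ℂ)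
    (i : Fin n) : MvPowerSeries (Fin n) ℂ :=
  ∑ j : Fin n, (a j * pderivPS j (b i) - b j * pderivPS j (a i))

/-!
Work with the order filtration of `ℂ[[x₁,…,xₙ]]`. A partial derivative lowers the order by at
most one, so when the coefficients of `X` have order `≥ 2` the bracket `⁅X, Y⁆` has coefficients
of order `≥ b + 1` as soon as those of `Y` have order `≥ b`. Since `⁅X, Y⁆ = c • Y` with `c` a
unit, the coefficients of `Y` have arbitrarily large order, i.e. they vanish.
-/

namespace MvPowerSeries

variable {σ R : Type*}

theorem le_order_of_mem_ker_constantCoeff_pow [CommSemiring R] {k : ℕ} {f : MvPowerSeries σ R}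
    (hf : f ∈ RingHom.ker (constantCoeff : MvPowerSeries σ R →+* R) ^ k) : k ≤ f.order := by
  induction k generalizing f with
  | zero => simp
  | succ k ih =>
    rw [pow_succ] at hf
    refine Submodule.mul_induction_on hf (fun g hg h hh => ?_) (fun g h hg hh => ?_)
    · have h1 : 1 ≤ h.order := one_le_order_iff_constCoeff_eq_zero.mpr (RingHom.mem_ker.mp hh)
      rw [Nat.cast_succ]
      exact (add_le_add (ih hg) h1).trans le_order_mul
    · exact le_min hg hh |>.trans min_order_le_add

theorem order_le_order_pderiv_add_one [CommSemiring R] (i : σ) (f : MvPowerSeries σ R) :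
    f.order ≤ (pderiv R i f).order + 1 := by
  by_cases h : pderiv R i f = 0
  · simp [h]
  obtain ⟨d, hd, hdeg⟩ := exists_coeff_ne_zero_and_order (ne_zero_iff_order_finite.mp h)
  rw [coeff_pderiv] at hd
  calc f.order ≤ (d + Finsupp.single i 1).degree := order_le (left_ne_zero_of_mul hd)
    _ = (pderiv R i f).order + 1 := by simp [← hdeg]

theorem order_smul_of_isUnit [Semiring R] {a : R} (ha : IsUnit a) (f : MvPowerSeries σ R) :
    (a • f).order = f.order := by
  refine le_antisymm ?_ le_order_smul
  obtain ⟨u, rfl⟩ := ha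
  calc (u • f).order ≤ (u⁻¹ • u • f).order := le_order_smul
    _ = f.order := by rw [inv_smul_smul]

end MvPowerSeries

theorem pderivPS_eq_pderiv {n : ℕ} (i : Fin n) (f : MvPowerSeries (Fin n) ℂ) :
    pderivPS i f = pderiv ℂ i f := by
  ext d
  rw [coeff_pderiv, mul_comm]
  simp [pderivPS, coeff_apply]

theorem add_one_le_order_bracketCoeff {n : ℕ} {A B : Fin n → MvPowerSeries (Fin n) ℂ}
    {b : ℕ∞} (hA : ∀ j, 2 ≤ (A j).order) (hB : ∀ j, b ≤ (B j).order) (i : Fin n) :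
    b + 1 ≤ (bracketCoeff A B i).order := by
  have hAB : ∀ j, b + 1 ≤ (A j * pderiv ℂ j (B i)).order := fun j => by
    have := (hB i).trans (order_le_order_pderiv_add_one j (B i))
    calc b + 1 ≤ (pderiv ℂ j (B i)).order + 1 + 1 := add_le_add this le_rfl
      _ = 2 + (pderiv ℂ j (B i)).order := by ring
      _ ≤ _ := (add_le_add (hA j) le_rfl).trans le_order_mul
  have hBA : ∀ j, b + 1 ≤ (B j * pderiv ℂ j (A i)).order := fun j => by
    have := (hA i).trans (order_le_order_pderiv_add_one j (A i))
    have h1 : 1 ≤ (pderiv ℂ j (A i)).order := by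
      rwa [← one_add_one_eq_two, ENat.add_le_add_iff_right ENat.one_ne_top] at this
    calc b + 1 ≤ (B j).order + (pderiv ℂ j (A i)).order := add_le_add (hB j) h1
      _ ≤ _ := le_order_mul
  refine le_order fun d hd => ?_
  simp only [bracketCoeff, pderivPS_eq_pderiv, map_sum, map_sub]
  refine Finset.sum_eq_zero fun j _ => ?_
  rw [coeff_of_lt_order (hd.trans_le (hAB j)), coeff_of_lt_order (hd.trans_le (hBA j)), sub_zero]

theorem eq_zero_of_bracket_eq_smul_general {n : ℕ}
    (A B : Fin n → MvPowerSeries (Fin n) ℂ)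
    (hA : ∀ i, A i ∈ (mIdeal n) ^ 2)
    (c : ℂ) (hc : c ≠ 0)
    (hrel : ∀ i, bracketCoeff A B i = c • B i) :
    ∀ i, B i = 0 := by
  have hA2 : ∀ j, 2 ≤ (A j).order := fun j => le_order_of_mem_ker_constantCoeff_pow (hA j)
  have hB_order : ∀ b : ℕ, ∀ i, (b : ℕ∞) ≤ (B i).order := by
    intro b
    induction b with
    | zero => simp
    | succ b ih =>
      intro i
      simpa [hrel, order_smul_of_isUnit hc.isUnit] using add_one_le_order_bracketCoeff hA2 ih i
  exact fun i => order_eq_top_iff.mp <|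
    top_le_iff.mp (ENat.forall_natCast_le_iff_le.mp fun b _ => hB_order b i)

/-- If `X` has vanishing linear part at the origin (coefficients in `m²`), `Y`
vanishes at the origin (coefficients in `m`), `c ≠ 0`, and `[X, Y] = c • Y`,
then `Y = 0`. -/
theorem eq_zero_of_bracket_eq_smul {n : ℕ}
    (A B : Fin n → MvPowerSeries (Fin n) ℂ)
    (hA : ∀ i, A i ∈ (mIdeal n) ^ 2) (hB : ∀ i, B i ∈ mIdeal n)
    (c : ℂ) (hc : c ≠ 0)
    (hrel : ∀ i, bracketCoeff A B i = c • B i) :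
    ∀ i, B i = 0 :=
  eq_zero_of_bracket_eq_smul_general A B hA c hc hrel
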